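/- Let q be a prime power with q ≥ d_0 k_0 + 1, and let (k_i), (d_i) be nondecreasing sequences of positive integers with q^{2^i} ≥ d_{i+1} k_{i+1} + 1 for all i ≥ 0. Then the sequence of polynomial-based CFF matrices C_{q^{2^i}, k_i, d_i} (over the tower of fields F_{q^{2^i}}) forms an embedding family: each matrix is a d_i-CFF((d_i k_i + 1) q^{2^i}, q^{2^i (k_i+1)}) and, after suitable row/column permutations, each appears as the top-left submatrix of the next. -/

import Mathlib

/-- Evaluation of the polynomial with coefficient vector `c` (degree at most `k`) at `x`. -/
def polyEval {F : Type*} [CommSemiring F] {k : ℕ} (c : Fin (k + 1) → F) (x : F) : F :=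
  ∑ i : Fin (k + 1), c i * x ^ (i : ℕ)

/-- A (Prop-valued) binary matrix `M` is the incidence matrix of a `d`-cover-free family. -/
def MatCFF {R C : Type*} (d : ℕ) (M : R → C → Prop) : Prop :=
  ∀ c₀ : C, ∀ S : Finset C, c₀ ∉ S → S.card ≤ d →
    ∃ r, M r c₀ ∧ ∀ c ∈ S, ¬ M r c

/-!
The columns of `C_{q,k,d}` are polynomials of degree `≤ k` and the rows are the points of their
graphs over a set `X` of `dk + 1` abscissae. Two distinct such polynomials agree on at most `k`
points, so `d` columns other than `c₀` agree with `c₀` on at most `dk` abscissae, and at any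
remaining `x ∈ X` the row `(x, c₀(x))` covers `c₀` but none of them.

For the embedding, a ring map `F_{q^{2^i}} → F_{q^{2^{i+1}}}` sends a polynomial to a polynomial
of the same degree and the graph of `c` to the graph of its image; extending the abscissae of each
level to those of the next (possible since `q^{2^i} ≥ d_{i+1} k_{i+1} + 1`) and padding
coefficient vectors by zeros then embeds each matrix in the next.
-/

open Polynomial Finset

section PolyEval

variable {F : Type*}

theorem polyEval_eq_eval_ofFn [CommRing F] [DecidableEq F] {k : ℕ} (c : Fin (k + 1) → F)
    (x : F) : polyEval c x = (ofFn (k + 1) c).eval x := by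
  simp [polyEval, ofFn_eq_sum_monomial, eval_finsetSum]

theorem polyEval_map {G : Type*} [CommSemiring F] [CommSemiring G] (φ : F →+* G) {k : ℕ}
    (c : Fin (k + 1) → F) (x : F) : polyEval (φ ∘ c) (φ x) = φ (polyEval c x) := by
  simp [polyEval, map_sum]

def padCoeffs [Zero F] {k k' : ℕ} (c : Fin (k + 1) → F) : Fin (k' + 1) → F :=
  fun j => if h : (j : ℕ) < k + 1 then c ⟨j, h⟩ else 0

theorem padCoeffs_injective [Zero F] {k k' : ℕ} (h : k ≤ k') :
    Function.Injective (padCoeffs (F := F) (k := k) (k' := k')) := by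
  intro c c' hcc
  funext j
  simpa [padCoeffs, Fin.is_le] using congrFun hcc (Fin.castLE (Nat.succ_le_succ h) j)

theorem polyEval_padCoeffs [CommRing F] {k k' : ℕ} (h : k ≤ k') (c : Fin (k + 1) → F)
    (x : F) : polyEval (padCoeffs (k' := k') c) x = polyEval c x := by
  classical
  rw [polyEval_eq_eval_ofFn, polyEval_eq_eval_ofFn]
  congr 1
  ext j
  by_cases hj : j < k + 1
  · have hj' : j < k' + 1 := by omega
    rw [ofFn_coeff_eq_val_of_lt _ hj', ofFn_coeff_eq_val_of_lt _ hj]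
    simp [padCoeffs, hj]
  rw [ofFn_coeff_eq_zero_of_ge _ (not_lt.mp hj)]
  by_cases hj' : j < k' + 1
  · simp [ofFn_coeff_eq_val_of_lt _ hj', padCoeffs, hj]
  · exact ofFn_coeff_eq_zero_of_ge _ (not_lt.mp hj')

theorem card_le_of_polyEval_eqOn [Field F] {k : ℕ} {c c₀ : Fin (k + 1) → F} (h : c ≠ c₀)
    {s : Finset F} (hs : ∀ x ∈ s, polyEval c x = polyEval c₀ x) : #s ≤ k := by
  classical
  by_contra! hlt
  have hdeg : ∀ v : Fin (k + 1) → F, (ofFn (k + 1) v).degree < #s := fun v =>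
    (ofFn_degree_lt v).trans_le (by exact_mod_cast hlt)
  refine h (injective_ofFn (k + 1) (eq_of_degrees_lt_of_eval_finset_eq s (hdeg c) (hdeg c₀) ?_))
  simpa [polyEval_eq_eval_ofFn] using hs

end PolyEval

theorem matCFF_polyEval {F : Type*} [Field F] {k d : ℕ} (xs : Fin (d * k + 1) ↪ F) :
    MatCFF d (fun (r : Fin (d * k + 1) × F) (c : Fin (k + 1) → F) =>
      polyEval c (xs r.1) = r.2) := by
  classical
  intro c₀ S hc₀ hS
  set pts := univ.map xs
  set B := S.biUnion fun c => pts.filter fun x => polyEval c x = polyEval c₀ x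
  have hB : #B < #pts := calc
    #B ≤ ∑ c ∈ S, #(pts.filter fun x => polyEval c x = polyEval c₀ x) := card_biUnion_le
    _ ≤ ∑ _c ∈ S, k := sum_le_sum fun c hc =>
      card_le_of_polyEval_eqOn (ne_of_mem_of_not_mem hc hc₀) fun _ hx => (mem_filter.mp hx).2
    _ = #S * k := by rw [sum_const, smul_eq_mul]
    _ ≤ d * k := Nat.mul_le_mul_right _ hS
    _ < #pts := by simp [pts]
  obtain ⟨x, hx, hxB⟩ := exists_mem_notMem_of_card_lt_card hB
  obtain ⟨j, -, rfl⟩ := mem_map.mp hx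
  exact ⟨(j, polyEval c₀ (xs j)), rfl, fun c hc hagree =>
    hxB (mem_biUnion.mpr ⟨c, hc, mem_filter.mpr ⟨hx, hagree⟩⟩)⟩

theorem exists_embeddings_compatible {F : ℕ → Type*} [∀ i, Finite (F i)]
    (φ : ∀ i, F i ↪ F (i + 1)) {n : ℕ → ℕ} (hn : ∀ i, n i ≤ n (i + 1))
    (hcard : ∀ i, n i ≤ Nat.card (F i)) :
    ∃ xs : ∀ i, Fin (n i) ↪ F i,
      ∀ i j, xs (i + 1) (Fin.castLE (hn i) j) = φ i (xs i j) := by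
  have hextend : ∀ i (x : Fin (n i) ↪ F i), ∃ y : Fin (n (i + 1)) ↪ F (i + 1),
      (Fin.castLEEmb (hn i)).trans y = x.trans (φ i) := fun i x =>
    Fin.Embedding.restrictSurjective_of_le_natCard (hn i) (hcard (i + 1)) _
  choose extend hextend using hextend
  obtain ⟨x₀, -⟩ := Fin.Embedding.exists_embedding_disjoint_range_of_add_le_Nat_card
    (s := (∅ : Set (F 0))) (by simpa using hcard 0)
  exact ⟨fun i => Nat.rec (motive := fun i => Fin (n i) ↪ F i) x₀ extend i,
    fun i j => DFunLike.congr_fun (hextend i _) j⟩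

theorem stmt5_general (q : ℕ) (k d : ℕ → ℕ)
    (hkm : ∀ i, k i ≤ k (i + 1)) (hdm : ∀ i, d i ≤ d (i + 1))
    (h0 : d 0 * k 0 + 1 ≤ q)
    (hgrow : ∀ i, d (i + 1) * k (i + 1) + 1 ≤ q ^ (2 ^ i))
    -- the tower of fields `F_{q^{2^i}}`
    (F : ℕ → Type*) [∀ i, Field (F i)] [∀ i, Fintype (F i)]
    (hF : ∀ i, Fintype.card (F i) = q ^ (2 ^ i))
    (φ : ∀ i, F i →+* F (i + 1)) :
    ∃ xs : ∀ i, Fin (d i * k i + 1) ↪ F i,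
      -- each matrix `C_{q^{2^i}, k_i, d_i}` is a `d_i`-CFF((d_i k_i + 1) q^{2^i}, q^{2^i(k_i+1)})
      (∀ i, MatCFF (d i)
        (fun (r : Fin (d i * k i + 1) × F i) (c : Fin (k i + 1) → F i) =>
          polyEval c (xs i r.1) = r.2)) ∧
      (∀ i, Fintype.card (Fin (d i * k i + 1) × F i) = (d i * k i + 1) * q ^ (2 ^ i) ∧
            Fintype.card (Fin (k i + 1) → F i) = q ^ (2 ^ i * (k i + 1))) ∧
      -- each matrix appears as the top-left submatrix of the next,
      -- after suitable row/column permutations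
      (∀ i, ∃ (ρ : (Fin (d i * k i + 1) × F i) → (Fin (d (i+1) * k (i+1) + 1) × F (i+1)))
            (σ : (Fin (k i + 1) → F i) → (Fin (k (i+1) + 1) → F (i+1))),
          Function.Injective ρ ∧ Function.Injective σ ∧
          ∀ r c, (polyEval (σ c) (xs (i+1) (ρ r).1) = (ρ r).2) ↔
                 (polyEval c (xs i r.1) = r.2)) := by
  have hrows : ∀ i, d i * k i + 1 ≤ d (i + 1) * k (i + 1) + 1 := fun i =>
    Nat.succ_le_succ (Nat.mul_le_mul (hdm i) (hkm i))
  have hcard : ∀ i, d i * k i + 1 ≤ Nat.card (F i) := by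
    rintro (_ | i)
    · simpa [hF] using h0
    · rw [Nat.card_eq_fintype_card, hF]
      exact (hgrow i).trans
        (Nat.pow_le_pow_right (by omega) (Nat.pow_le_pow_right two_pos i.le_succ))
  obtain ⟨xs, hxs⟩ :=
    exists_embeddings_compatible (fun i => ⟨φ i, (φ i).injective⟩) hrows hcard
  refine ⟨xs, fun i => matCFF_polyEval (xs i), fun i => ⟨by simp [hF], by simp [hF, pow_mul]⟩,
    fun i => ⟨Prod.map (Fin.castLE (hrows i)) (φ i), fun c => padCoeffs (φ i ∘ c),
      (Fin.castLE_injective _).prodMap (φ i).injective,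
      (padCoeffs_injective (hkm i)).comp (φ i).injective.comp_left, fun r c => ?_⟩⟩
  simp only [Prod.map_fst, Prod.map_snd, hxs, Function.Embedding.coeFn_mk,
    polyEval_padCoeffs (hkm i), polyEval_map]
  exact (φ i).injective.eq_iff

theorem stmt5 (q : ℕ) (hq : IsPrimePow q) (k d : ℕ → ℕ)
    (hk : ∀ i, 1 ≤ k i) (hd : ∀ i, 1 ≤ d i)
    (hkm : ∀ i, k i ≤ k (i + 1)) (hdm : ∀ i, d i ≤ d (i + 1))
    (h0 : d 0 * k 0 + 1 ≤ q)
    (hgrow : ∀ i, d (i + 1) * k (i + 1) + 1 ≤ q ^ (2 ^ i))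
    -- the tower of fields `F_{q^{2^i}}`
    (F : ℕ → Type*) [∀ i, Field (F i)] [∀ i, Fintype (F i)]
    (hF : ∀ i, Fintype.card (F i) = q ^ (2 ^ i))
    (φ : ∀ i, F i →+* F (i + 1)) :
    ∃ xs : ∀ i, Fin (d i * k i + 1) ↪ F i,
      -- each matrix `C_{q^{2^i}, k_i, d_i}` is a `d_i`-CFF((d_i k_i + 1) q^{2^i}, q^{2^i(k_i+1)})
      (∀ i, MatCFF (d i)
        (fun (r : Fin (d i * k i + 1) × F i) (c : Fin (k i + 1) → F i) =>
          polyEval c (xs i r.1) = r.2)) ∧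
      (∀ i, Fintype.card (Fin (d i * k i + 1) × F i) = (d i * k i + 1) * q ^ (2 ^ i) ∧
            Fintype.card (Fin (k i + 1) → F i) = q ^ (2 ^ i * (k i + 1))) ∧
      -- each matrix appears as the top-left submatrix of the next,
      -- after suitable row/column permutations
      (∀ i, ∃ (ρ : (Fin (d i * k i + 1) × F i) → (Fin (d (i+1) * k (i+1) + 1) × F (i+1)))
            (σ : (Fin (k i + 1) → F i) → (Fin (k (i+1) + 1) → F (i+1))),
          Function.Injective ρ ∧ Function.Injective σ ∧
          ∀ r c, (polyEval (σ c) (xs (i+1) (ρ r).1) = (ρ r).2) ↔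
                 (polyEval c (xs i r.1) = r.2)) :=
  stmt5_general q k d hkm hdm h0 hgrow F hF φ
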